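/- arXiv:1705.10499 — 5 statements merged into one kernel-verified Lean document; each statement's English description precedes it below -/
import Mathlib

section
/- (SC-AdaNGD_2, smooth case: linear rate.) Let H > 0, let f : ℝ^d → ℝ be differentiable, H-strongly convex and β-smooth with ‖∇f(x)‖ ≤ G for all x ∈ K, and suppose the global minimizer x* := argmin_{x ∈ ℝ^d} f(x) belongs to K. Assume moreover e^{(H/β)T} ≥ 3. Let x_1, …, x_T and x̄_T be the SC-AdaNGD_k iterates and output with k = 2, with g_t := ∇f(x_t) ≠ 0 for all t = 1, …, T. Then f(x̄_T) − min_{x ∈ K} f(x) ≤ (3G² / (2H)) · e^{−(H/β)T} · (1 + (H/β)T). -/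
/-!
Weighting step `t` by `a_t = ‖g_t‖⁻²` turns SC-AdaNGD₂ into projected gradient descent on the
`H`-strongly convex `f` with step `1 / (H S_t)`, `S_t = a_1 + ⋯ + a_t`. Since the projection does
not increase the distance to `x* ∈ K`, the terms `S_t ‖x_{t+1} - x*‖²` telescope and
`∑ a_t (f x_t - f x*) ≤ (∑ a_t / S_t) / (2H) ≤ (1 + log (S_T / a_1)) / (2H)`, while Jensen bounds
`S_T (f x̄ - f x*)` by the same sum. Smoothness gives `‖g_t‖² ≤ 2β (f x_t - f x*)`, so every summand
is at least `1 / (2β)`; hence `log (S_T / a_1) ≥ HT/β - 1`, the total weight `S_T` grows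
exponentially in `T`, and dividing by it gives the linear rate.
-/

open Finset Real
open scoped InnerProductSpace

theorem sum_div_sum_Icc_le_one_add_log (a : ℕ → ℝ) {T : ℕ} (hT : 1 ≤ T)
    (ha : ∀ t ∈ Icc 1 T, 0 < a t) :
    ∑ t ∈ Icc 1 T, a t / ∑ τ ∈ Icc 1 t, a τ ≤ 1 + log ((∑ τ ∈ Icc 1 T, a τ) / a 1) := by
  induction T, hT using Nat.le_induction with
  | base => simp [div_self (ha 1 (by simp)).ne']
  | succ T hT ih =>
    have hsub : Icc 1 T ⊆ Icc 1 (T + 1) := Icc_subset_Icc_right T.le_succ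
    have hS : 0 < ∑ τ ∈ Icc 1 T, a τ := sum_pos (fun t ht => ha t (hsub ht)) ⟨T, by simp [hT]⟩
    have ha1 : 0 < a 1 := ha 1 (by simp)
    have hlast : 0 < a (T + 1) := ha (T + 1) (by simp)
    have hprev := ih fun t ht => ha t (hsub ht)
    have hincr := one_sub_inv_le_log_of_pos (x := (∑ τ ∈ Icc 1 T, a τ + a (T + 1)) /
      ∑ τ ∈ Icc 1 T, a τ) (by positivity)
    rw [inv_div, log_div (by positivity) hS.ne', one_sub_div (by positivity),
      add_sub_cancel_left] at hincr
    rw [sum_Icc_succ_top (by omega), sum_Icc_succ_top (by omega),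
      log_div (by positivity) ha1.ne']
    rw [log_div hS.ne' ha1.ne'] at hprev
    linarith

theorem one_add_log_le_mul_exp {c u : ℝ} (hc : 0 ≤ c) (hu : 0 < u) (hcu : c ≤ 1 + log u) :
    1 + log u ≤ (1 + c) * exp (1 - c) * u := by
  set w := exp (1 - c) * u
  have hw : 1 ≤ w := by
    rw [← log_nonneg_iff (by positivity), log_mul (exp_pos _).ne' hu.ne', log_exp]
    linarith
  have hlog : log w ≤ w - 1 := log_le_sub_one_of_pos (by positivity)
  rw [log_mul (exp_pos _).ne' hu.ne', log_exp] at hlog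
  nlinarith

section

variable {E : Type*} [NormedAddCommGroup E] [InnerProductSpace ℝ E]

theorem Convex.norm_sub_le_of_forall_norm_sub_le {K : Set E} (hK : Convex ℝ K) {p y z : E}
    (hp : p ∈ K) (hnearest : ∀ w ∈ K, ‖p - y‖ ≤ ‖w - y‖) (hz : z ∈ K) :
    ‖p - z‖ ≤ ‖y - z‖ := by
  have : Nonempty K := ⟨⟨z, hz⟩⟩
  have hinf : ‖y - p‖ = ⨅ w : K, ‖y - w‖ :=
    le_antisymm (le_ciInf fun w => by simpa only [norm_sub_rev] using hnearest w w.2)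
      (ciInf_le (f := fun w : K => ‖y - (w : E)‖) ⟨0, by rintro _ ⟨w, rfl⟩; positivity⟩ ⟨p, hp⟩)
  have hobtuse : ⟪y - p, z - p⟫_ℝ ≤ 0 := (norm_eq_iInf_iff_real_inner_le_zero hK hp).1 hinf z hz
  have hsplit : ‖y - z‖ ^ 2 = ‖y - p‖ ^ 2 - 2 * ⟪y - p, z - p⟫_ℝ + ‖p - z‖ ^ 2 := by
    rw [show y - z = (y - p) - (z - p) by abel, norm_sub_sq_real, ← norm_neg (z - p), neg_sub]
  exact le_of_sq_le_sq (by nlinarith [sq_nonneg ‖y - p‖]) (norm_nonneg _)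

theorem le_of_quadratic_bounds {f : E → ℝ} {x y l : E} {H β : ℝ} (hxy : x ≠ y)
    (hlower : f x + ⟪l, y - x⟫_ℝ + H / 2 * ‖x - y‖ ^ 2 ≤ f y)
    (hupper : f y ≤ f x + ⟪l, y - x⟫_ℝ + β / 2 * ‖x - y‖ ^ 2) : H ≤ β := by
  have : 0 < ‖x - y‖ ^ 2 := by have := sub_ne_zero.2 hxy; positivity
  nlinarith

theorem sq_norm_le_of_smooth {f : E → ℝ} {x l : E} {β m : ℝ} (hβ : 0 < β)
    (hsmooth : ∀ y, f y ≤ f x + ⟪l, y - x⟫_ℝ + β / 2 * ‖x - y‖ ^ 2) (hm : ∀ y, m ≤ f y) :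
    ‖l‖ ^ 2 ≤ 2 * β * (f x - m) := by
  have h := (hm _).trans (hsmooth (x - β⁻¹ • l))
  rw [sub_sub_cancel_left, sub_sub_cancel, inner_neg_right, real_inner_smul_right,
    real_inner_self_eq_norm_sq, norm_smul, mul_pow, Real.norm_eq_abs, sq_abs] at h
  have hsimp : -(β⁻¹ * ‖l‖ ^ 2) + β / 2 * (β⁻¹ ^ 2 * ‖l‖ ^ 2) = -(‖l‖ ^ 2 / (2 * β)) := by
    field_simp; ring
  rw [add_assoc, hsimp, ← sub_eq_add_neg] at h
  rw [← div_le_iff₀' (by positivity)]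
  linarith

theorem convexOn_univ_of_add_inner_le {f : E → ℝ} (l : E → E)
    (hf : ∀ x y, f x + ⟪l x, y - x⟫_ℝ ≤ f y) : ConvexOn ℝ Set.univ f := by
  refine ⟨convex_univ, fun x _ y _ a b ha hb hab => ?_⟩
  set z := a • x + b • y
  have hcancel : a * ⟪l z, x - z⟫_ℝ + b * ⟪l z, y - z⟫_ℝ = 0 := by
    rw [← real_inner_smul_right, ← real_inner_smul_right, ← inner_add_right, smul_sub, smul_sub,
      ← add_sub_add_comm, ← add_smul, hab, one_smul, sub_self, inner_zero_right]
  have hsplit : f z = a * (f z + ⟪l z, x - z⟫_ℝ) + b * (f z + ⟪l z, y - z⟫_ℝ) := by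
    linear_combination (-f z) * hab - hcancel
  simp only [smul_eq_mul]
  rw [hsplit]
  gcongr <;> apply hf

theorem ConvexOn.sum_mul_sub_le {ι : Type*} {f : E → ℝ} (hf : ConvexOn ℝ Set.univ f)
    (s : Finset ι) (a : ι → ℝ) (p : ι → E) (ha : ∀ i ∈ s, 0 ≤ a i) (hs : 0 < ∑ i ∈ s, a i)
    (m : ℝ) :
    (∑ i ∈ s, a i) * (f (∑ i ∈ s, (a i / ∑ j ∈ s, a j) • p i) - m) ≤
      ∑ i ∈ s, a i * (f (p i) - m) := by
  have hjensen := hf.map_sum_le (t := s) (w := fun i => a i / ∑ j ∈ s, a j) (p := p)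
    (fun i hi => div_nonneg (ha i hi) hs.le) (by rw [← sum_div, div_self hs.ne'])
    (fun _ _ => Set.mem_univ _)
  simp only [smul_eq_mul, div_mul_eq_mul_div, ← sum_div] at hjensen
  rw [le_div_iff₀ hs] at hjensen
  simp only [mul_sub, sum_sub_distrib, ← sum_mul]
  linarith

theorem mul_sub_le_of_projected_step {f : E → ℝ} {x x' g z : E} {a S H : ℝ} (hH : 0 < H)
    (hS : 0 < S) (ha : 0 ≤ a) (hsc : f x + ⟪g, z - x⟫_ℝ + H / 2 * ‖x - z‖ ^ 2 ≤ f z)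
    (hstep : ‖x' - z‖ ≤ ‖x - (a / (H * S)) • g - z‖) :
    a * (f x - f z) ≤
      H / 2 * ((S - a) * ‖x - z‖ ^ 2 - S * ‖x' - z‖ ^ 2) + a ^ 2 * ‖g‖ ^ 2 / (2 * H * S) := by
  set c := a / (H * S) with hc
  have hexpand : ‖x - c • g - z‖ ^ 2 = ‖x - z‖ ^ 2 - 2 * c * ⟪g, x - z⟫_ℝ + c ^ 2 * ‖g‖ ^ 2 := by
    rw [sub_right_comm, norm_sub_sq_real, real_inner_smul_right, norm_smul, mul_pow,
      Real.norm_eq_abs, sq_abs, real_inner_comm]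
    ring
  have hdist : H * S / 2 * ‖x' - z‖ ^ 2 ≤
      H * S / 2 * ‖x - z‖ ^ 2 - a * ⟪g, x - z⟫_ℝ + a ^ 2 * ‖g‖ ^ 2 / (2 * H * S) :=
    calc H * S / 2 * ‖x' - z‖ ^ 2 ≤ H * S / 2 * ‖x - c • g - z‖ ^ 2 := by gcongr
      _ = _ := by rw [hexpand, hc]; field_simp
  have hgap : a * (f x - f z + H / 2 * ‖x - z‖ ^ 2) ≤ a * ⟪g, x - z⟫_ℝ := by
    rw [← neg_sub x z, inner_neg_right] at hsc
    exact mul_le_mul_of_nonneg_left (by linarith) ha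
  linarith

theorem sum_mul_sub_le_of_projected_steps {f : E → ℝ} {H : ℝ} (hH : 0 < H) (z : E)
    (a : ℕ → ℝ) (x g : ℕ → E) (T : ℕ) (ha : ∀ t ∈ Icc 1 T, 0 < a t)
    (hsc : ∀ t ∈ Icc 1 T, f (x t) + ⟪g t, z - x t⟫_ℝ + H / 2 * ‖x t - z‖ ^ 2 ≤ f z)
    (hstep : ∀ t ∈ Icc 1 T,
      ‖x (t + 1) - z‖ ≤ ‖x t - (a t / (H * ∑ τ ∈ Icc 1 t, a τ)) • g t - z‖) :
    ∑ t ∈ Icc 1 T, a t * (f (x t) - f z) ≤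
      ∑ t ∈ Icc 1 T, a t ^ 2 * ‖g t‖ ^ 2 / (2 * H * ∑ τ ∈ Icc 1 t, a τ) -
        H / 2 * (∑ τ ∈ Icc 1 T, a τ) * ‖x (T + 1) - z‖ ^ 2 := by
  induction T with
  | zero => simp
  | succ T ih =>
    have hsub : Icc 1 T ⊆ Icc 1 (T + 1) := Icc_subset_Icc_right T.le_succ
    have hlast : T + 1 ∈ Icc 1 (T + 1) := by simp
    have hS : 0 < ∑ τ ∈ Icc 1 (T + 1), a τ :=
      sum_pos (fun t ht => ha t ht) ⟨T + 1, hlast⟩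
    have hprev := ih (fun t ht => ha t (hsub ht)) (fun t ht => hsc t (hsub ht))
      (fun t ht => hstep t (hsub ht))
    have hnew := mul_sub_le_of_projected_step hH hS (ha _ hlast).le (hsc _ hlast)
      (hstep _ hlast)
    simp only [sum_Icc_succ_top (Nat.le_add_left 1 T)] at hprev hnew ⊢
    rw [add_sub_cancel_right] at hnew
    linarith

theorem div_le_sum_inv_sq_norm_mul_sub {f : E → ℝ} {β m : ℝ} (hβ : 0 < β) (x g : ℕ → E) (T : ℕ)
    (hg : ∀ t ∈ Icc 1 T, g t ≠ 0)
    (hsmooth : ∀ t ∈ Icc 1 T, ∀ y, f y ≤ f (x t) + ⟪g t, y - x t⟫_ℝ + β / 2 * ‖x t - y‖ ^ 2)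
    (hm : ∀ y, m ≤ f y) :
    T / (2 * β) ≤ ∑ t ∈ Icc 1 T, (‖g t‖ ^ 2)⁻¹ * (f (x t) - m) :=
  calc (T : ℝ) / (2 * β) = ∑ t ∈ Icc 1 T, 1 / (2 * β) := by simp [div_eq_mul_inv]
    _ ≤ _ := sum_le_sum fun t ht => by
      have hgt := sq_norm_le_of_smooth hβ (hsmooth t ht) hm
      rw [inv_mul_eq_div, div_le_div_iff₀ (by positivity) (by have := hg t ht; positivity)]
      linarith

theorem sum_inv_sq_norm_mul_sub_le {f : E → ℝ} {H : ℝ} (hH : 0 < H) (z : E) (x g : ℕ → E)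
    {T : ℕ} (hT : 1 ≤ T) (hg : ∀ t ∈ Icc 1 T, g t ≠ 0)
    (hsc : ∀ t ∈ Icc 1 T, f (x t) + ⟪g t, z - x t⟫_ℝ + H / 2 * ‖x t - z‖ ^ 2 ≤ f z)
    (hstep : ∀ t ∈ Icc 1 T, ‖x (t + 1) - z‖ ≤
      ‖x t - ((‖g t‖ ^ 2)⁻¹ / (H * ∑ τ ∈ Icc 1 t, (‖g τ‖ ^ 2)⁻¹)) • g t - z‖) :
    ∑ t ∈ Icc 1 T, (‖g t‖ ^ 2)⁻¹ * (f (x t) - f z) ≤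
      (1 + log ((∑ τ ∈ Icc 1 T, (‖g τ‖ ^ 2)⁻¹) * ‖g 1‖ ^ 2)) / (2 * H) := by
  have ha : ∀ t ∈ Icc 1 T, 0 < (‖g t‖ ^ 2)⁻¹ := fun t ht => by have := hg t ht; positivity
  calc _ ≤ ∑ t ∈ Icc 1 T, ((‖g t‖ ^ 2)⁻¹) ^ 2 * ‖g t‖ ^ 2 /
        (2 * H * ∑ τ ∈ Icc 1 t, (‖g τ‖ ^ 2)⁻¹) :=
      (sum_mul_sub_le_of_projected_steps hH z _ x g T ha hsc hstep).trans
        (sub_le_self _ (by positivity))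
    _ = (∑ t ∈ Icc 1 T, (‖g t‖ ^ 2)⁻¹ / ∑ τ ∈ Icc 1 t, (‖g τ‖ ^ 2)⁻¹) / (2 * H) := by
      rw [sum_div]
      refine sum_congr rfl fun t ht => ?_
      have := (ha t ht).ne'
      field_simp
    _ ≤ _ := by
      gcongr
      rw [← div_inv_eq_mul]
      exact sum_div_sum_Icc_le_one_add_log _ hT ha

end

theorem le_rate_of_weight_bounds {Δ S n H β T W : ℝ} (hH : 0 < H) (hβ : 0 < β) (hT : 0 ≤ T)
    (hS : 0 < S) (hn : 0 < n) (hlower : T / (2 * β) ≤ W)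
    (hupper : W ≤ (1 + log (S * n)) / (2 * H)) (hΔ : S * Δ ≤ W) :
    Δ ≤ 3 * n / (2 * H) * exp (-(H / β) * T) * (1 + H / β * T) := by
  rw [neg_mul]
  set c := H / β * T
  have hc : c ≤ 1 + log (S * n) :=
    calc c = T / (2 * β) * (2 * H) := by simp only [c]; field_simp
      _ ≤ (1 + log (S * n)) / (2 * H) * (2 * H) :=
        mul_le_mul_of_nonneg_right (hlower.trans hupper) (by positivity)
      _ = _ := div_mul_cancel₀ _ (by positivity)
  have hexp : exp (1 - c) ≤ 3 * exp (-c) := by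
    rw [sub_eq_add_neg, exp_add]; gcongr; linarith [exp_one_lt_d9]
  rw [← mul_le_mul_iff_of_pos_left hS]
  calc S * Δ ≤ (1 + log (S * n)) / (2 * H) := hΔ.trans hupper
    _ ≤ (1 + c) * exp (1 - c) * (S * n) / (2 * H) := by
      gcongr; exact one_add_log_le_mul_exp (by positivity) (by positivity) hc
    _ ≤ (1 + c) * (3 * exp (-c)) * (S * n) / (2 * H) := by gcongr
    _ = S * (3 * n / (2 * H) * exp (-c) * (1 + c)) := by ring

theorem sc_adangd_two_smooth_general
    {d : ℕ} (T : ℕ) (hT : 1 ≤ T) (H G β : ℝ) (hH : 0 < H)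
    (K : Set (EuclideanSpace ℝ (Fin d)))
    (hKconv : Convex ℝ K)
    (proj : EuclideanSpace ℝ (Fin d) → EuclideanSpace ℝ (Fin d))
    (hproj_mem : ∀ y, proj y ∈ K)
    (hproj_min : ∀ y, ∀ z ∈ K, ‖proj y - y‖ ≤ ‖z - y‖)
    (f : EuclideanSpace ℝ (Fin d) → ℝ)
    (hsc : ∀ x y, f x + (inner ℝ (gradient f x) (y - x) : ℝ) + (H / 2) * ‖x - y‖ ^ 2 ≤ f y)
    (hsmooth : ∀ x y, f y ≤ f x + (inner ℝ (gradient f x) (y - x) : ℝ) + (β / 2) * ‖x - y‖ ^ 2)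
    (hG : ∀ x ∈ K, ‖gradient f x‖ ≤ G)
    (xstar : EuclideanSpace ℝ (Fin d)) (hxstarK : xstar ∈ K)
    (hmin : ∀ y, f xstar ≤ f y)
    (x : ℕ → EuclideanSpace ℝ (Fin d)) (g : ℕ → EuclideanSpace ℝ (Fin d)) (η : ℕ → ℝ)
    (hx1 : x 1 ∈ K)
    (hg : ∀ t, g t = gradient f (x t))
    (hgne : ∀ t ∈ Finset.Icc 1 T, g t ≠ 0)
    (hη : ∀ t, η t = 1 / (H * ∑ τ ∈ Finset.Icc 1 t, (‖g τ‖ ^ 2)⁻¹))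
    (hupd : ∀ t ∈ Finset.Icc 1 T, x (t + 1) = proj (x t - (η t / ‖g t‖ ^ 2) • g t))
    (xbar : EuclideanSpace ℝ (Fin d))
    (hxbar : xbar = ∑ t ∈ Finset.Icc 1 T, (((‖g t‖ ^ 2)⁻¹) / ∑ τ ∈ Finset.Icc 1 T, (‖g τ‖ ^ 2)⁻¹) • x t)
    :
    ∀ xs ∈ K,
      f xbar - f xs ≤
        (3 * G ^ 2 / (2 * H)) * Real.exp (-(H / β) * T) * (1 + (H / β) * T) := by
  intro xs _
  have hg1 : g 1 ≠ 0 := hgne 1 (by simp [hT])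
  have ha : ∀ t ∈ Icc 1 T, 0 < (‖g t‖ ^ 2)⁻¹ := fun t ht => by have := hgne t ht; positivity
  have hS := sum_pos ha ⟨1, by simp [hT]⟩
  have hβ : 0 < β := hH.trans_le (le_of_quadratic_bounds hg1.symm (hsc 0 (g 1)) (hsmooth 0 (g 1)))
  have hstep : ∀ t ∈ Icc 1 T, ‖x (t + 1) - xstar‖ ≤
      ‖x t - ((‖g t‖ ^ 2)⁻¹ / (H * ∑ τ ∈ Icc 1 t, (‖g τ‖ ^ 2)⁻¹)) • g t - xstar‖ := by
    intro t ht
    have hrate : η t / ‖g t‖ ^ 2 = (‖g t‖ ^ 2)⁻¹ / (H * ∑ τ ∈ Icc 1 t, (‖g τ‖ ^ 2)⁻¹) := by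
      rw [hη t]; ring
    rw [hupd t ht, hrate]
    exact hKconv.norm_sub_le_of_forall_norm_sub_le (hproj_mem _) (hproj_min _) hxstarK
  have hjensen := hxbar ▸ (convexOn_univ_of_add_inner_le (gradient f) fun x y =>
    (le_add_of_nonneg_right (by positivity)).trans (hsc x y)).sum_mul_sub_le _ _ x
    (fun t ht => (ha t ht).le) hS (f xstar)
  calc f xbar - f xs ≤ f xbar - f xstar := by linarith [hmin xs]
    _ ≤ 3 * ‖g 1‖ ^ 2 / (2 * H) * exp (-(H / β) * T) * (1 + H / β * T) :=
      le_rate_of_weight_bounds hH hβ T.cast_nonneg hS (by positivity)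
        (div_le_sum_inv_sq_norm_mul_sub hβ x g T hgne (fun t _ => hg t ▸ hsmooth (x t)) hmin)
        (sum_inv_sq_norm_mul_sub_le hH xstar x g hT hgne (fun t _ => hg t ▸ hsc (x t) xstar)
          hstep)
        hjensen
    _ ≤ _ := by gcongr; exact hg 1 ▸ hG (x 1) hx1

theorem sc_adangd_two_smooth
    {d : ℕ} (T : ℕ) (hT : 1 ≤ T) (H G β : ℝ) (hH : 0 < H)
    (K : Set (EuclideanSpace ℝ (Fin d)))
    (hKne : K.Nonempty) (hKcl : IsClosed K) (hKbdd : Bornology.IsBounded K)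
    (hKconv : Convex ℝ K)
    (proj : EuclideanSpace ℝ (Fin d) → EuclideanSpace ℝ (Fin d))
    (hproj_mem : ∀ y, proj y ∈ K)
    (hproj_min : ∀ y, ∀ z ∈ K, ‖proj y - y‖ ≤ ‖z - y‖)
    (f : EuclideanSpace ℝ (Fin d) → ℝ)
    (hdiff : Differentiable ℝ f)
    (hsc : ∀ x y, f x + (inner ℝ (gradient f x) (y - x) : ℝ) + (H / 2) * ‖x - y‖ ^ 2 ≤ f y)
    (hsmooth : ∀ x y, f y ≤ f x + (inner ℝ (gradient f x) (y - x) : ℝ) + (β / 2) * ‖x - y‖ ^ 2)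
    (hG : ∀ x ∈ K, ‖gradient f x‖ ≤ G)
    (xstar : EuclideanSpace ℝ (Fin d)) (hxstarK : xstar ∈ K)
    (hmin : ∀ y, f xstar ≤ f y)
    (hexp : 3 ≤ Real.exp ((H / β) * T))
    (x : ℕ → EuclideanSpace ℝ (Fin d)) (g : ℕ → EuclideanSpace ℝ (Fin d)) (η : ℕ → ℝ)
    (hx1 : x 1 ∈ K)
    (hg : ∀ t, g t = gradient f (x t))
    (hgne : ∀ t ∈ Finset.Icc 1 T, g t ≠ 0)
    (hη : ∀ t, η t = 1 / (H * ∑ τ ∈ Finset.Icc 1 t, (‖g τ‖ ^ 2)⁻¹))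
    (hupd : ∀ t ∈ Finset.Icc 1 T, x (t + 1) = proj (x t - (η t / ‖g t‖ ^ 2) • g t))
    (xbar : EuclideanSpace ℝ (Fin d))
    (hxbar : xbar = ∑ t ∈ Finset.Icc 1 T, (((‖g t‖ ^ 2)⁻¹) / ∑ τ ∈ Finset.Icc 1 T, (‖g τ‖ ^ 2)⁻¹) • x t)
    :
    ∀ xs ∈ K,
      f xbar - f xs ≤
        (3 * G ^ 2 / (2 * H)) * Real.exp (-(H / β) * T) * (1 + (H / β) * T) :=
  sc_adangd_two_smooth_general T hT H G β hH K hKconv proj hproj_mem hproj_min f hsc hsmooth hG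
    xstar hxstarK hmin x g η hx1 hg hgne hη hupd xbar hxbar
end

section
/- (SC-AdaGrad regret bound.) Let f_1, …, f_T : ℝ^d → ℝ be differentiable, where each f_t is H_t-strongly convex with H_t > 0. Let x_1 ∈ K, and for t = 1, …, T set g_t := ∇f_t(x_t), η_t := 1 / (Σ_{τ=1}^t H_τ), and x_{t+1} := Π_K(x_t − η_t g_t). Then for every x ∈ K: Σ_{t=1}^T f_t(x_t) − Σ_{t=1}^T f_t(x) ≤ (1/2) Σ_{t=1}^T η_t ‖g_t‖². -/
/-!
Projection onto `K` does not increase the distance to points of `K`, so each step satisfies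
`2 η ⟪g, x - u⟫ ≤ ‖x - u‖² - ‖x' - u‖² + η² ‖g‖²`. With `S t = ∑_{τ ≤ t} H τ = 1 / η t`,
strong convexity turns this into the per-step regret bound
`(b t - b (t + 1)) / 2 + η t ‖g t‖² / 2`, where `b t = S (t - 1) ‖x t - u‖²`, because
`S t - H t = S (t - 1)`. The `b`-terms telescope to `b 1 - b (T + 1) ≤ 0`, as `S 0 = 0`.
-/

open Finset RealInnerProductSpace

section ProjectedGradient

variable {E : Type*} [NormedAddCommGroup E] [InnerProductSpace ℝ E]

theorem real_inner_sub_nonpos_of_forall_norm_sub_le {K : Set E} (hK : Convex ℝ K) {y p : E}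
    (hp : p ∈ K) (hmin : ∀ z ∈ K, ‖p - y‖ ≤ ‖z - y‖) : ∀ z ∈ K, ⟪y - p, z - p⟫ ≤ 0 := by
  have : Nonempty K := ⟨⟨p, hp⟩⟩
  refine (norm_eq_iInf_iff_real_inner_le_zero hK hp).mp (le_antisymm ?_ ?_)
  · exact le_ciInf fun z => by simpa only [norm_sub_rev y] using hmin z z.2
  · have hbdd : BddBelow (Set.range fun z : K => ‖y - z‖) := ⟨0, by rintro _ ⟨z, rfl⟩; positivity⟩
    exact ciInf_le hbdd ⟨p, hp⟩

theorem norm_sub_sq_le_of_forall_norm_sub_le {K : Set E} (hK : Convex ℝ K) {y p : E}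
    (hp : p ∈ K) (hmin : ∀ z ∈ K, ‖p - y‖ ≤ ‖z - y‖) : ∀ z ∈ K, ‖p - z‖ ^ 2 ≤ ‖y - z‖ ^ 2 := by
  intro z hz
  have hvar := real_inner_sub_nonpos_of_forall_norm_sub_le hK hp hmin z hz
  have hsplit : y - z = (y - p) - (z - p) := by abel
  rw [norm_sub_rev p z, hsplit, norm_sub_sq_real (x := y - p)]
  nlinarith [sq_nonneg ‖y - p‖]

theorem two_mul_real_inner_le_of_norm_sub_sq_le {x x' u g : E} {η : ℝ}
    (h : ‖x' - u‖ ^ 2 ≤ ‖x - η • g - u‖ ^ 2) :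
    2 * η * ⟪g, x - u⟫ ≤ ‖x - u‖ ^ 2 - ‖x' - u‖ ^ 2 + η ^ 2 * ‖g‖ ^ 2 := by
  have hexpand : ‖x - η • g - u‖ ^ 2 = ‖x - u‖ ^ 2 - 2 * η * ⟪g, x - u⟫ + η ^ 2 * ‖g‖ ^ 2 := by
    rw [sub_right_comm, norm_sub_sq_real, real_inner_smul_right, real_inner_comm, norm_smul,
      mul_pow, Real.norm_eq_abs, sq_abs]
    ring
  linarith

theorem sub_le_of_strongConvex_of_norm_sub_sq_le {φ : E → ℝ} {h η : ℝ} {x x' u g : E}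
    (hη : 0 < η) (hsc : φ x + ⟪g, u - x⟫ + h / 2 * ‖x - u‖ ^ 2 ≤ φ u)
    (hstep : ‖x' - u‖ ^ 2 ≤ ‖x - η • g - u‖ ^ 2) :
    φ x - φ u ≤ ((η⁻¹ - h) * ‖x - u‖ ^ 2 - η⁻¹ * ‖x' - u‖ ^ 2) / 2 + η * ‖g‖ ^ 2 / 2 := by
  have hdescent := two_mul_real_inner_le_of_norm_sub_sq_le hstep
  have hinner : ⟪g, u - x⟫ = -⟪g, x - u⟫ := by rw [← inner_neg_right, neg_sub]
  have hscaled : ⟪g, x - u⟫ ≤ (η⁻¹ * ‖x - u‖ ^ 2 - η⁻¹ * ‖x' - u‖ ^ 2) / 2 + η * ‖g‖ ^ 2 / 2 := by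
    have := mul_le_mul_of_nonneg_left hdescent (inv_nonneg.2 hη.le)
    field_simp at this ⊢
    linarith
  linarith

theorem sum_sub_le_of_strongConvex_of_norm_sub_sq_le {f : ℕ → E → ℝ} {H η : ℕ → ℝ}
    {x g : ℕ → E} {u : E} {T : ℕ} (hH : ∀ t, 0 < H t)
    (hη : ∀ t, η t = 1 / ∑ τ ∈ Icc 1 t, H τ)
    (hsc : ∀ t ∈ Icc 1 T, f t (x t) + ⟪g t, u - x t⟫ + H t / 2 * ‖x t - u‖ ^ 2 ≤ f t u)
    (hstep : ∀ t ∈ Icc 1 T, ‖x (t + 1) - u‖ ^ 2 ≤ ‖x t - η t • g t - u‖ ^ 2) :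
    ∑ t ∈ Icc 1 T, (f t (x t) - f t u) ≤ 1 / 2 * ∑ t ∈ Icc 1 T, η t * ‖g t‖ ^ 2 := by
  set S : ℕ → ℝ := fun t => ∑ τ ∈ Icc 1 t, H τ with hS
  have hS_nonneg : ∀ t, 0 ≤ S t := fun t => sum_nonneg fun τ _ => (hH τ).le
  have hS_pos : ∀ t, 1 ≤ t → 0 < S t := fun t ht =>
    sum_pos (fun τ _ => hH τ) ⟨1, mem_Icc.2 ⟨le_rfl, ht⟩⟩
  have hS_pred : ∀ t, 1 ≤ t → S t - H t = S (t - 1) := by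
    intro t ht
    obtain ⟨k, rfl⟩ := Nat.exists_eq_add_of_le' ht
    simp [hS, sum_Icc_succ_top]
  set b : ℕ → ℝ := fun t => S (t - 1) * ‖x t - u‖ ^ 2 with hb
  have hbound : ∀ t ∈ Icc 1 T, f t (x t) - f t u ≤ (b t - b (t + 1)) / 2 + η t * ‖g t‖ ^ 2 / 2 := by
    intro t ht
    have ht1 := (mem_Icc.1 ht).1
    have hηpos : 0 < η t := by rw [hη]; exact one_div_pos.2 (hS_pos t ht1)
    have hη_inv : (η t)⁻¹ = S t := by rw [hη, one_div, inv_inv]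
    have := sub_le_of_strongConvex_of_norm_sub_sq_le hηpos (hsc t ht) (hstep t ht)
    rwa [hη_inv, hS_pred t ht1] at this
  have htelescope : ∑ t ∈ Icc 1 T, (b t - b (t + 1)) = b 1 - b (T + 1) := by
    rw [← Ico_add_one_right_eq_Icc, ← neg_sub (b (T + 1)), ← sum_Ico_sub b (by omega : 1 ≤ T + 1),
      ← sum_neg_distrib]
    simp only [neg_sub]
  have hb_one : b 1 = 0 := by simp [hb, hS]
  have hb_last : 0 ≤ b (T + 1) := mul_nonneg (hS_nonneg _) (by positivity)
  calc ∑ t ∈ Icc 1 T, (f t (x t) - f t u)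
      ≤ ∑ t ∈ Icc 1 T, ((b t - b (t + 1)) / 2 + η t * ‖g t‖ ^ 2 / 2) := sum_le_sum hbound
    _ = (b 1 - b (T + 1)) / 2 + 1 / 2 * ∑ t ∈ Icc 1 T, η t * ‖g t‖ ^ 2 := by
      rw [sum_add_distrib, ← sum_div, ← sum_div, htelescope]
      ring
    _ ≤ 1 / 2 * ∑ t ∈ Icc 1 T, η t * ‖g t‖ ^ 2 := by linarith

end ProjectedGradient

theorem sc_adagrad_regret_general
    {d : ℕ} (T : ℕ)
    (K : Set (EuclideanSpace ℝ (Fin d)))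
    (hKconv : Convex ℝ K)
    (proj : EuclideanSpace ℝ (Fin d) → EuclideanSpace ℝ (Fin d))
    (hproj_mem : ∀ y, proj y ∈ K)
    (hproj_min : ∀ y, ∀ z ∈ K, ‖proj y - y‖ ≤ ‖z - y‖)
    (f : ℕ → EuclideanSpace ℝ (Fin d) → ℝ) (H : ℕ → ℝ)
    (hH : ∀ t, 0 < H t)
    (hsc : ∀ t x y, f t x + (inner ℝ (gradient (f t) x) (y - x) : ℝ) + (H t / 2) * ‖x - y‖ ^ 2 ≤ f t y)
    (x : ℕ → EuclideanSpace ℝ (Fin d)) (g : ℕ → EuclideanSpace ℝ (Fin d)) (η : ℕ → ℝ)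
    (hg : ∀ t, g t = gradient (f t) (x t))
    (hη : ∀ t, η t = 1 / ∑ τ ∈ Finset.Icc 1 t, H τ)
    (hupd : ∀ t ∈ Finset.Icc 1 T, x (t + 1) = proj (x t - η t • g t)) :
    ∀ xs ∈ K,
      ∑ t ∈ Finset.Icc 1 T, f t (x t) - ∑ t ∈ Finset.Icc 1 T, f t xs ≤
        (1 / 2) * ∑ t ∈ Finset.Icc 1 T, η t * ‖g t‖ ^ 2 := by
  intro xs hxs
  rw [← sum_sub_distrib]
  refine sum_sub_le_of_strongConvex_of_norm_sub_sq_le hH hη (fun t _ => ?_) (fun t ht => ?_)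
  · rw [hg]
    exact hsc t (x t) xs
  · rw [hupd t ht]
    exact norm_sub_sq_le_of_forall_norm_sub_le hKconv (hproj_mem _) (hproj_min _) xs hxs

theorem sc_adagrad_regret
    {d : ℕ} (T : ℕ) (hT : 1 ≤ T)
    (K : Set (EuclideanSpace ℝ (Fin d)))
    (hKne : K.Nonempty) (hKcl : IsClosed K) (hKbdd : Bornology.IsBounded K)
    (hKconv : Convex ℝ K)
    (proj : EuclideanSpace ℝ (Fin d) → EuclideanSpace ℝ (Fin d))
    (hproj_mem : ∀ y, proj y ∈ K)
    (hproj_min : ∀ y, ∀ z ∈ K, ‖proj y - y‖ ≤ ‖z - y‖)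
    (f : ℕ → EuclideanSpace ℝ (Fin d) → ℝ) (H : ℕ → ℝ)
    (hH : ∀ t, 0 < H t)
    (hdiff : ∀ t, Differentiable ℝ (f t))
    (hsc : ∀ t x y, f t x + (inner ℝ (gradient (f t) x) (y - x) : ℝ) + (H t / 2) * ‖x - y‖ ^ 2 ≤ f t y)
    (x : ℕ → EuclideanSpace ℝ (Fin d)) (g : ℕ → EuclideanSpace ℝ (Fin d)) (η : ℕ → ℝ)
    (hx1 : x 1 ∈ K)
    (hg : ∀ t, g t = gradient (f t) (x t))
    (hη : ∀ t, η t = 1 / ∑ τ ∈ Finset.Icc 1 t, H τ)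
    (hupd : ∀ t ∈ Finset.Icc 1 T, x (t + 1) = proj (x t - η t • g t)) :
    ∀ xs ∈ K,
      ∑ t ∈ Finset.Icc 1 T, f t (x t) - ∑ t ∈ Finset.Icc 1 T, f t xs ≤
        (1 / 2) * ∑ t ∈ Finset.Icc 1 T, η t * ‖g t‖ ^ 2 :=
  sc_adagrad_regret_general T K hKconv proj hproj_mem hproj_min f H hH hsc x g η hg hη hupd
end

section
/- (Logarithmic sum inequality.) For any real numbers a_1, …, a_n with a_i ≥ 1 for all i: Σ_{i=1}^n a_i / (Σ_{j=1}^i a_j) ≤ 1 + log(Σ_{i=1}^n a_i). -/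
open Finset Real

lemma sub_div_le_log_sub_log {s t : ℝ} (hs : 0 < s) (ht : 0 < t) :
    (t - s) / t ≤ log t - log s := by
  have h := one_sub_inv_le_log_of_pos (div_pos ht hs)
  rwa [log_div ht.ne' hs.ne', inv_div, ← div_self ht.ne', ← sub_div] at h

/-- Each term `a i / S i` is at most `log S i - log S (i - 1)`, so the sum telescopes. -/
lemma sum_Icc_div_partial_sum_le {n : ℕ} (hn : 1 ≤ n) {a : ℕ → ℝ}
    (ha : ∀ i ∈ Icc 1 n, 0 < a i) :
    ∑ i ∈ Icc 1 n, a i / ∑ j ∈ Icc 1 i, a j ≤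
      1 + log (∑ i ∈ Icc 1 n, a i) - log (a 1) := by
  induction n, hn using Nat.le_induction with
  | base =>
    simp [div_self (ha 1 (by simp)).ne']
  | succ n hn ih =>
    have ha' : ∀ i ∈ Icc 1 n, 0 < a i := fun i hi =>
      ha i (Icc_subset_Icc_right n.le_succ hi)
    have hS : 0 < ∑ i ∈ Icc 1 n, a i :=
      sum_pos ha' (nonempty_Icc.mpr hn)
    have hnext : 0 < a (n + 1) := ha (n + 1) (by simp)
    have hstep := sub_div_le_log_sub_log hS (add_pos hS hnext)
    rw [add_sub_cancel_left] at hstep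
    rw [sum_Icc_succ_top (by omega), sum_Icc_succ_top (by omega)]
    linarith [ih ha']

theorem log_sum_inequality
    (n : ℕ) (a : ℕ → ℝ) (ha : ∀ i ∈ Finset.Icc 1 n, 1 ≤ a i) :
    ∑ i ∈ Finset.Icc 1 n, a i / (∑ j ∈ Finset.Icc 1 i, a j) ≤
      1 + Real.log (∑ i ∈ Finset.Icc 1 n, a i) := by
  rcases Nat.eq_zero_or_pos n with rfl | hn
  · simp
  have hpos : ∀ i ∈ Icc 1 n, 0 < a i := fun i hi => one_pos.trans_le (ha i hi)
  have hlog_a₁ : 0 ≤ log (a 1) := log_nonneg (ha 1 (mem_Icc.mpr ⟨le_rfl, hn⟩))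
  linarith [sum_Icc_div_partial_sum_le hn hpos]
end

section
/- (Exponential growth of the inverse-squared-gradient sum along SC-AdaNGD_2 iterates, smooth case.) Let H > 0, let f : ℝ^d → ℝ be differentiable, H-strongly convex and β-smooth with ‖∇f(x)‖ ≤ G for all x ∈ K, and suppose the global minimizer x* := argmin_{x ∈ ℝ^d} f(x) belongs to K. Let x_1, …, x_T be the SC-AdaNGD_k iterates with k = 2, with g_t := ∇f(x_t) ≠ 0 for all t = 1, …, T. Then G² · Σ_{t=1}^T 1/‖g_t‖² ≥ (1/3) · e^{(H/β)T}. -/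
/-!
With `S t = ∑_{τ ≤ t} ‖g τ‖⁻²`, the potential `H S_{t-1} ‖x t - x*‖²` drops by at least `1/β`
per step, up to an error `‖g t‖⁻² / (H S t)`: the projection onto `K` does not increase the
distance to `x* ∈ K`, and strong convexity plus `β`-smoothness give
`⟪g t, x t - x*⟫ ≥ ‖g t‖² / (2β) + (H/2) ‖x t - x*‖²`. Telescoping yields
`(H/β) T ≤ ∑_t ‖g t‖⁻² / S t`, and comparing with the logarithm bounds this sum by
`1 + log (S T / S 1)`. As `S 1 ≥ G⁻²`, exponentiating gives `G² S T ≥ e^{HT/β - 1} ≥ e^{HT/β} / 3`.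
-/

open Finset Real
open scoped RealInnerProductSpace

theorem add_mul_le_add_sum_of_forall_succ_add_le {Φ b : ℕ → ℝ} {c : ℝ} {n : ℕ}
    (h : ∀ t ∈ Icc 1 n, Φ (t + 1) + c ≤ Φ t + b t) :
    Φ (n + 1) + n * c ≤ Φ 1 + ∑ t ∈ Icc 1 n, b t := by
  induction n with
  | zero => simp
  | succ m ih =>
    have hlast := h (m + 1) (by simp)
    have hprev := ih fun t ht => h t (by simp only [mem_Icc] at ht ⊢; omega)
    rw [sum_Icc_succ_top (by omega), Nat.cast_succ]
    linarith

theorem sum_Icc_pos {a : ℕ → ℝ} {n : ℕ} (ha : ∀ t ∈ Icc 1 n, 0 < a t) :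
    ∀ t ∈ Icc 1 n, 0 < ∑ τ ∈ Icc 1 t, a τ := fun t ht =>
  sum_pos (fun τ hτ => ha τ (by simp only [mem_Icc] at ht hτ ⊢; omega))
    (nonempty_Icc.mpr (mem_Icc.mp ht).1)

theorem div_add_le_log_add_div {S a : ℝ} (hS : 0 < S) (ha : 0 ≤ a) :
    a / (S + a) ≤ log ((S + a) / S) := by
  have := one_sub_inv_le_log_of_pos (div_pos (add_pos_of_pos_of_nonneg hS ha) hS)
  rw [inv_div] at this
  calc a / (S + a) = 1 - S / (S + a) := by field_simp; ring
    _ ≤ _ := this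

theorem sum_div_partialSum_le_one_add_log {a : ℕ → ℝ} {n : ℕ} (hn : 1 ≤ n)
    (ha : ∀ t ∈ Icc 1 n, 0 < a t) :
    ∑ t ∈ Icc 1 n, a t / ∑ τ ∈ Icc 1 t, a τ ≤ 1 + log ((∑ t ∈ Icc 1 n, a t) / a 1) := by
  induction n, hn using Nat.le_induction with
  | base => simp [(ha 1 (by simp)).ne']
  | succ m hm ih =>
    have ha' : ∀ t ∈ Icc 1 m, 0 < a t := fun t ht => ha t (by simp only [mem_Icc] at ht ⊢; omega)
    have hSm : 0 < ∑ t ∈ Icc 1 m, a t := sum_Icc_pos ha m (by simp [hm])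
    have hnext := div_add_le_log_add_div hSm (ha (m + 1) (by simp)).le
    have ha1 := ha' 1 (by simp [hm])
    have hsplit : log ((∑ t ∈ Icc 1 m, a t + a (m + 1)) / a 1)
        = log ((∑ t ∈ Icc 1 m, a t + a (m + 1)) / ∑ t ∈ Icc 1 m, a t)
          + log ((∑ t ∈ Icc 1 m, a t) / a 1) := by
      have hnext_pos : 0 < ∑ t ∈ Icc 1 m, a t + a (m + 1) := by linarith [ha (m + 1) (by simp)]
      rw [← log_mul (div_pos hnext_pos hSm).ne' (div_pos hSm ha1).ne', div_mul_div_cancel₀ hSm.ne']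
    rw [sum_Icc_succ_top (by omega), sum_Icc_succ_top (by omega), hsplit]
    linarith [ih ha']

theorem one_third_mul_exp_le {y z : ℝ} (hz : 0 < z) (h : y ≤ 1 + log z) : 1 / 3 * exp y ≤ z :=
  calc 1 / 3 * exp y ≤ 1 / 3 * exp (1 + log z) := by gcongr
    _ = exp 1 / 3 * z := by rw [exp_add, exp_log hz]; ring
    _ ≤ z := mul_le_of_le_one_left hz.le (by linarith [exp_one_lt_three])

section InnerProductSpace

variable {F : Type*} [NormedAddCommGroup F] [InnerProductSpace ℝ F]

theorem Convex.norm_sub_sq_le_of_isMinOn {K : Set F} (hK : Convex ℝ K) {y p z : F}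
    (hp : p ∈ K) (hpmin : IsMinOn (fun w => ‖w - y‖) K p) (hz : z ∈ K) :
    ‖p - z‖ ^ 2 ≤ ‖y - z‖ ^ 2 := by
  have : Nonempty K := ⟨⟨p, hp⟩⟩
  have hinf : ‖y - p‖ = ⨅ w : K, ‖y - w‖ := by
    refine le_antisymm (le_ciInf fun w => ?_) (ciInf_le ⟨0, ?_⟩ (⟨p, hp⟩ : K))
    · simpa only [norm_sub_rev y] using isMinOn_iff.mp hpmin w w.2
    · rintro _ ⟨w, rfl⟩
      exact norm_nonneg _
  have hobtuse : ⟪y - p, z - p⟫ ≤ 0 := (norm_eq_iInf_iff_real_inner_le_zero hK hp).mp hinf z hz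
  have hexpand : ‖y - z‖ ^ 2 = ‖y - p‖ ^ 2 - 2 * ⟪y - p, z - p⟫ + ‖p - z‖ ^ 2 := by
    rw [← norm_sub_rev z p, ← sub_sub_sub_cancel_right y z p]
    exact norm_sub_sq_real (y - p) (z - p)
  nlinarith [sq_nonneg ‖y - p‖]

variable {H β : ℝ}

theorem adaNGD_two_potential_step {K : Set F} (hK : Convex ℝ K) {z y v p : F} {s s' : ℝ}
    (hH : 0 < H) (hs : 0 < s) (hv : v ≠ 0) (hss' : s = s' + (‖v‖ ^ 2)⁻¹) (hz : z ∈ K)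
    (hp : p ∈ K) (hpmin : IsMinOn (fun w => ‖w - (y - (1 / (H * s) / ‖v‖ ^ 2) • v)‖) K p)
    (hinner : ‖v‖ ^ 2 / (2 * β) + H / 2 * ‖y - z‖ ^ 2 ≤ ⟪v, y - z⟫) :
    H * s * ‖p - z‖ ^ 2 + 1 / β ≤ H * s' * ‖y - z‖ ^ 2 + (‖v‖ ^ 2)⁻¹ / (H * s) := by
  set c := 1 / (H * s) / ‖v‖ ^ 2 with hc
  have hexpand : ‖y - c • v - z‖ ^ 2 = ‖y - z‖ ^ 2 - 2 * c * ⟪v, y - z⟫ + c ^ 2 * ‖v‖ ^ 2 := by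
    rw [sub_right_comm, norm_sub_sq_real, real_inner_smul_right, real_inner_comm, norm_smul,
      mul_pow, Real.norm_eq_abs, sq_abs]
    ring
  have hproj := hexpand ▸ hK.norm_sub_sq_le_of_isMinOn hp hpmin hz
  calc H * s * ‖p - z‖ ^ 2 + 1 / β
      ≤ H * s * (‖y - z‖ ^ 2 - 2 * c * ⟪v, y - z⟫ + c ^ 2 * ‖v‖ ^ 2) + 1 / β := by gcongr
    _ ≤ H * s * (‖y - z‖ ^ 2 - 2 * c * (‖v‖ ^ 2 / (2 * β) + H / 2 * ‖y - z‖ ^ 2)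
          + c ^ 2 * ‖v‖ ^ 2) + 1 / β := by gcongr
    _ = H * s' * ‖y - z‖ ^ 2 + (‖v‖ ^ 2)⁻¹ / (H * s) := by
      rw [show s' = s - (‖v‖ ^ 2)⁻¹ by linarith, hc]
      field_simp
      ring

theorem adaNGD_two_mul_div_le_sum_div {K : Set F} (hK : Convex ℝ K) {z : F} (hz : z ∈ K)
    {x g : ℕ → F} {T : ℕ} (hH : 0 < H) (hg : ∀ t ∈ Icc 1 T, g t ≠ 0)
    (hxK : ∀ t ∈ Icc 1 T, x (t + 1) ∈ K)
    (hxmin : ∀ t ∈ Icc 1 T, IsMinOn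
      (fun w => ‖w - (x t - (1 / (H * ∑ τ ∈ Icc 1 t, (‖g τ‖ ^ 2)⁻¹) / ‖g t‖ ^ 2) • g t)‖) K (x (t + 1)))
    (hinner : ∀ t ∈ Icc 1 T, ‖g t‖ ^ 2 / (2 * β) + H / 2 * ‖x t - z‖ ^ 2 ≤ ⟪g t, x t - z⟫) :
    H / β * T ≤ ∑ t ∈ Icc 1 T, (‖g t‖ ^ 2)⁻¹ / ∑ τ ∈ Icc 1 t, (‖g τ‖ ^ 2)⁻¹ := by
  set S : ℕ → ℝ := fun t => ∑ τ ∈ Icc 1 t, (‖g τ‖ ^ 2)⁻¹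
  have hS : ∀ t ∈ Icc 1 T, 0 < S t := sum_Icc_pos fun t ht => by simp [hg t ht]
  let Φ : ℕ → ℝ := fun t => H * S (t - 1) * ‖x t - z‖ ^ 2
  have hstep : ∀ t ∈ Icc 1 T, Φ (t + 1) + 1 / β ≤ Φ t + (‖g t‖ ^ 2)⁻¹ / (H * S t) :=
    fun t ht => by
      have hS_pred : S t = S (t - 1) + (‖g t‖ ^ 2)⁻¹ := by
        obtain ⟨k, rfl⟩ : ∃ k, t = k + 1 := ⟨t - 1, by simp only [mem_Icc] at ht; omega⟩
        exact sum_Icc_succ_top (by omega) _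
      exact adaNGD_two_potential_step hK hH (hS t ht) (hg t ht) hS_pred hz (hxK t ht) (hxmin t ht)
        (hinner t ht)
  have htel := add_mul_le_add_sum_of_forall_succ_add_le hstep
  have hΦ_one : Φ 1 = 0 := by simp [Φ, S]
  have hΦ_last : 0 ≤ Φ (T + 1) := by positivity
  calc H / β * T = H * (T * (1 / β)) := by ring
    _ ≤ H * ∑ t ∈ Icc 1 T, (‖g t‖ ^ 2)⁻¹ / (H * S t) := by gcongr; linarith
    _ = ∑ t ∈ Icc 1 T, (‖g t‖ ^ 2)⁻¹ / S t := by
      rw [mul_sum]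
      exact sum_congr rfl fun t _ => by field_simp

variable [CompleteSpace F] {f : F → ℝ}

theorem le_of_strongConvex_of_smooth
    (hsc : ∀ x y, f x + ⟪gradient f x, y - x⟫ + (H / 2) * ‖x - y‖ ^ 2 ≤ f y)
    (hsmooth : ∀ x y, f y ≤ f x + ⟪gradient f x, y - x⟫ + (β / 2) * ‖x - y‖ ^ 2)
    {x y : F} (hxy : x ≠ y) : H ≤ β := by
  have hpos : 0 < ‖x - y‖ ^ 2 := by positivity [sub_ne_zero.mpr hxy]
  nlinarith [hsc x y, hsmooth x y]

theorem norm_gradient_sq_div_le_sub_min (hβ : 0 < β)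
    (hsmooth : ∀ x y, f y ≤ f x + ⟪gradient f x, y - x⟫ + (β / 2) * ‖x - y‖ ^ 2)
    {xstar : F} (hmin : ∀ y, f xstar ≤ f y) (x : F) :
    ‖gradient f x‖ ^ 2 / (2 * β) ≤ f x - f xstar := by
  have hdescent := hsmooth x (x - β⁻¹ • gradient f x)
  rw [sub_sub_cancel_left, sub_sub_cancel, inner_neg_right, real_inner_smul_right,
    real_inner_self_eq_norm_sq, norm_smul, mul_pow, Real.norm_eq_abs, sq_abs] at hdescent
  have hgap : β⁻¹ * ‖gradient f x‖ ^ 2 - β / 2 * (β⁻¹ ^ 2 * ‖gradient f x‖ ^ 2)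
      = ‖gradient f x‖ ^ 2 / (2 * β) := by
    field_simp
    ring
  linarith [hmin (x - β⁻¹ • gradient f x)]

theorem le_inner_gradient_sub_of_strongConvex_of_smooth (hβ : 0 < β)
    (hsc : ∀ x y, f x + ⟪gradient f x, y - x⟫ + (H / 2) * ‖x - y‖ ^ 2 ≤ f y)
    (hsmooth : ∀ x y, f y ≤ f x + ⟪gradient f x, y - x⟫ + (β / 2) * ‖x - y‖ ^ 2)
    {xstar : F} (hmin : ∀ y, f xstar ≤ f y) (x : F) :
    ‖gradient f x‖ ^ 2 / (2 * β) + H / 2 * ‖x - xstar‖ ^ 2 ≤ ⟪gradient f x, x - xstar⟫ := by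
  have := hsc x xstar
  rw [← neg_sub x xstar, inner_neg_right] at this
  linarith [norm_gradient_sq_div_le_sub_min hβ hsmooth hmin x]

end InnerProductSpace

theorem sc_adangd_two_exp_growth_general
    {d : ℕ} (T : ℕ) (hT : 1 ≤ T) (H G β : ℝ) (hH : 0 < H)
    (K : Set (EuclideanSpace ℝ (Fin d)))
    (hKconv : Convex ℝ K)
    (proj : EuclideanSpace ℝ (Fin d) → EuclideanSpace ℝ (Fin d))
    (hproj_mem : ∀ y, proj y ∈ K)
    (hproj_min : ∀ y, ∀ z ∈ K, ‖proj y - y‖ ≤ ‖z - y‖)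
    (f : EuclideanSpace ℝ (Fin d) → ℝ)
    (hsc : ∀ x y, f x + (inner ℝ (gradient f x) (y - x) : ℝ) + (H / 2) * ‖x - y‖ ^ 2 ≤ f y)
    (hsmooth : ∀ x y, f y ≤ f x + (inner ℝ (gradient f x) (y - x) : ℝ) + (β / 2) * ‖x - y‖ ^ 2)
    (hG : ∀ x ∈ K, ‖gradient f x‖ ≤ G)
    (xstar : EuclideanSpace ℝ (Fin d)) (hxstarK : xstar ∈ K)
    (hmin : ∀ y, f xstar ≤ f y)
    (x : ℕ → EuclideanSpace ℝ (Fin d)) (g : ℕ → EuclideanSpace ℝ (Fin d)) (η : ℕ → ℝ)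
    (hx1 : x 1 ∈ K)
    (hg : ∀ t, g t = gradient f (x t))
    (hgne : ∀ t ∈ Finset.Icc 1 T, g t ≠ 0)
    (hη : ∀ t, η t = 1 / (H * ∑ τ ∈ Finset.Icc 1 t, (‖g τ‖ ^ 2)⁻¹))
    (hupd : ∀ t ∈ Finset.Icc 1 T, x (t + 1) = proj (x t - (η t / ‖g t‖ ^ 2) • g t))
    :
    (1 / 3) * Real.exp ((H / β) * T) ≤
      G ^ 2 * ∑ t ∈ Finset.Icc 1 T, (‖g t‖ ^ 2)⁻¹ := by
  have h1 : 1 ∈ Icc 1 T := by simp [hT]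
  have hβ : 0 < β := hH.trans_le <| le_of_strongConvex_of_smooth hsc hsmooth
    (x := x 1) (y := x 1 + g 1) (by simpa using hgne 1 h1)
  have hsum := adaNGD_two_mul_div_le_sum_div hKconv hxstarK hH hgne
    (fun t ht => hupd t ht ▸ hproj_mem _)
    (fun t ht => by rw [hupd t ht, ← hη t]; exact isMinOn_iff.mpr (hproj_min _))
    (fun t _ => hg t ▸ le_inner_gradient_sub_of_strongConvex_of_smooth hβ hsc hsmooth hmin (x t))
  have ha : ∀ t ∈ Icc 1 T, 0 < (‖g t‖ ^ 2)⁻¹ := fun t ht => by simp [hgne t ht]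
  have hST := sum_Icc_pos ha T (by simp [hT])
  have hG1 : ‖g 1‖ ^ 2 ≤ G ^ 2 := pow_le_pow_left₀ (norm_nonneg _) (hg 1 ▸ hG _ hx1) 2
  refine one_third_mul_exp_le (mul_pos ((inv_pos.mp (ha 1 h1)).trans_le hG1) hST) ?_
  calc H / β * T ≤ _ := hsum
    _ ≤ 1 + log ((∑ t ∈ Icc 1 T, (‖g t‖ ^ 2)⁻¹) / (‖g 1‖ ^ 2)⁻¹) :=
      sum_div_partialSum_le_one_add_log hT ha
    _ ≤ 1 + log (G ^ 2 * ∑ t ∈ Icc 1 T, (‖g t‖ ^ 2)⁻¹) := by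
      rw [div_inv_eq_mul, mul_comm]
      gcongr
      exact mul_pos (inv_pos.mp (ha 1 h1)) hST

theorem sc_adangd_two_exp_growth
    {d : ℕ} (T : ℕ) (hT : 1 ≤ T) (H G β : ℝ) (hH : 0 < H)
    (K : Set (EuclideanSpace ℝ (Fin d)))
    (hKne : K.Nonempty) (hKcl : IsClosed K) (hKbdd : Bornology.IsBounded K)
    (hKconv : Convex ℝ K)
    (proj : EuclideanSpace ℝ (Fin d) → EuclideanSpace ℝ (Fin d))
    (hproj_mem : ∀ y, proj y ∈ K)
    (hproj_min : ∀ y, ∀ z ∈ K, ‖proj y - y‖ ≤ ‖z - y‖)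
    (f : EuclideanSpace ℝ (Fin d) → ℝ)
    (hdiff : Differentiable ℝ f)
    (hsc : ∀ x y, f x + (inner ℝ (gradient f x) (y - x) : ℝ) + (H / 2) * ‖x - y‖ ^ 2 ≤ f y)
    (hsmooth : ∀ x y, f y ≤ f x + (inner ℝ (gradient f x) (y - x) : ℝ) + (β / 2) * ‖x - y‖ ^ 2)
    (hG : ∀ x ∈ K, ‖gradient f x‖ ≤ G)
    (xstar : EuclideanSpace ℝ (Fin d)) (hxstarK : xstar ∈ K)
    (hmin : ∀ y, f xstar ≤ f y)
    (x : ℕ → EuclideanSpace ℝ (Fin d)) (g : ℕ → EuclideanSpace ℝ (Fin d)) (η : ℕ → ℝ)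
    (hx1 : x 1 ∈ K)
    (hg : ∀ t, g t = gradient f (x t))
    (hgne : ∀ t ∈ Finset.Icc 1 T, g t ≠ 0)
    (hη : ∀ t, η t = 1 / (H * ∑ τ ∈ Finset.Icc 1 t, (‖g τ‖ ^ 2)⁻¹))
    (hupd : ∀ t ∈ Finset.Icc 1 T, x (t + 1) = proj (x t - (η t / ‖g t‖ ^ 2) • g t))
    :
    (1 / 3) * Real.exp ((H / β) * T) ≤
      G ^ 2 * ∑ t ∈ Finset.Icc 1 T, (‖g t‖ ^ 2)⁻¹ :=
  sc_adangd_two_exp_growth_general T hT H G β hH K hKconv proj hproj_mem hproj_min f hsc hsmooth hG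
    xstar hxstarK hmin x g η hx1 hg hgne hη hupd
end

section
/- (Gradient-norm sum bound along SC-AdaNGD_1 iterates, smooth case.) Let H > 0, let f : ℝ^d → ℝ be differentiable, H-strongly convex and β-smooth with ‖∇f(x)‖ ≤ G for all x ∈ K, and suppose the global minimizer x* := argmin_{x ∈ ℝ^d} f(x) belongs to K. Let x_1, …, x_T be the SC-AdaNGD_k iterates with k = 1, with g_t := ∇f(x_t) ≠ 0 for all t = 1, …, T. Then Σ_{t=1}^T ‖g_t‖ ≤ (β/H) · G · (1 + log(Σ_{t=1}^T G/‖g_t‖)). -/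
/-!
Strong convexity at `x_t` and smoothness at the minimiser give
`⟪g_t, x_t - x*⟫ ≥ ‖g_t‖² / (2β) + (H/2) ‖x_t - x*‖²`. Since projecting onto `K` does not increase
the distance to `x* ∈ K`, multiplying the resulting one-step distance recursion by
`A_t = 1 / η_t = H ∑_{τ ≤ t} ‖g_τ‖⁻¹` makes the potential `A_t ‖x_{t+1} - x*‖²` telescope, leaving
`∑ ‖g_t‖ / β ≤ ∑ η_t`. Finally `‖g_τ‖ ≤ G` gives `η_t ≤ G / (H t)`, and the harmonic sum is at most
`1 + log T ≤ 1 + log ∑ G / ‖g_t‖`.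
-/

open Finset Real
open scoped InnerProductSpace

section Projection

variable {E : Type*} [NormedAddCommGroup E] [InnerProductSpace ℝ E] {K : Set E} {proj : E → E}

theorem real_inner_sub_proj_le_zero (hK : Convex ℝ K) (hmem : ∀ y, proj y ∈ K)
    (hmin : ∀ y, ∀ z ∈ K, ‖proj y - y‖ ≤ ‖z - y‖) (y : E) {z : E} (hz : z ∈ K) :
    ⟪y - proj y, z - proj y⟫_ℝ ≤ 0 := by
  have : Nonempty K := ⟨⟨proj y, hmem y⟩⟩
  refine (norm_eq_iInf_iff_real_inner_le_zero hK (hmem y)).1 (le_antisymm ?_ ?_) z hz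
  · exact le_ciInf fun w => by simpa only [norm_sub_rev] using hmin y w w.2
  · exact ciInf_le ⟨0, Set.forall_mem_range.2 fun w => norm_nonneg _⟩ (⟨proj y, hmem y⟩ : K)

theorem norm_proj_sub_le (hK : Convex ℝ K) (hmem : ∀ y, proj y ∈ K)
    (hmin : ∀ y, ∀ z ∈ K, ‖proj y - y‖ ≤ ‖z - y‖) (y : E) {z : E} (hz : z ∈ K) :
    ‖proj y - z‖ ≤ ‖y - z‖ := by
  have hinner := real_inner_sub_proj_le_zero hK hmem hmin y hz
  have hsplit : ‖y - z‖ ^ 2 =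
      ‖y - proj y‖ ^ 2 - 2 * ⟪y - proj y, z - proj y⟫_ℝ + ‖proj y - z‖ ^ 2 := by
    rw [norm_sub_rev (proj y) z, ← norm_sub_sq_real, sub_sub_sub_cancel_right]
  refine (pow_le_pow_iff_left₀ (norm_nonneg _) (norm_nonneg _) two_ne_zero).1 ?_
  nlinarith [sq_nonneg ‖y - proj y‖]

end Projection

section QuadraticBounds

variable {E : Type*} [NormedAddCommGroup E] [InnerProductSpace ℝ E] {f : E → ℝ}
  {x y xstar g : E} {H β : ℝ}

theorem le_of_quadratic_lower_le_upper (hxy : x ≠ y)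
    (hlower : f x + ⟪g, y - x⟫_ℝ + H / 2 * ‖x - y‖ ^ 2 ≤ f y)
    (hupper : f y ≤ f x + ⟪g, y - x⟫_ℝ + β / 2 * ‖x - y‖ ^ 2) : H ≤ β := by
  have : 0 < ‖x - y‖ ^ 2 := by positivity [sub_ne_zero.2 hxy]
  nlinarith

theorem sq_norm_div_le_sub_of_smooth (hβ : 0 < β)
    (hsmooth : ∀ y, f y ≤ f x + ⟪g, y - x⟫_ℝ + β / 2 * ‖x - y‖ ^ 2)
    (hmin : ∀ y, f xstar ≤ f y) :
    ‖g‖ ^ 2 / (2 * β) ≤ f x - f xstar := by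
  have hstep := hsmooth (x - β⁻¹ • g)
  rw [sub_sub_cancel_left, sub_sub_cancel, inner_neg_right, real_inner_smul_right,
    real_inner_self_eq_norm_sq, norm_smul, Real.norm_of_nonneg (inv_nonneg.2 hβ.le)] at hstep
  have : β⁻¹ * ‖g‖ ^ 2 - β / 2 * (β⁻¹ * ‖g‖) ^ 2 = ‖g‖ ^ 2 / (2 * β) := by
    field_simp
    ring
  linarith [hmin (x - β⁻¹ • g)]

theorem inner_sub_ge_of_strongConvex_of_smooth (hβ : 0 < β)
    (hsc : f x + ⟪g, xstar - x⟫_ℝ + H / 2 * ‖x - xstar‖ ^ 2 ≤ f xstar)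
    (hsmooth : ∀ y, f y ≤ f x + ⟪g, y - x⟫_ℝ + β / 2 * ‖x - y‖ ^ 2)
    (hmin : ∀ y, f xstar ≤ f y) :
    ‖g‖ ^ 2 / (2 * β) + H / 2 * ‖x - xstar‖ ^ 2 ≤ ⟪g, x - xstar⟫_ℝ := by
  rw [← neg_sub x xstar, inner_neg_right] at hsc
  linarith [sq_norm_div_le_sub_of_smooth hβ hsmooth hmin]

end QuadraticBounds

section Step

variable {E : Type*} [NormedAddCommGroup E] [InnerProductSpace ℝ E] {K : Set E} {proj : E → E}
  {x xstar g : E} {H β η : ℝ}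

theorem sq_norm_proj_step_sub_le (hK : Convex ℝ K) (hmem : ∀ y, proj y ∈ K)
    (hmin : ∀ y, ∀ z ∈ K, ‖proj y - y‖ ≤ ‖z - y‖) (hxstar : xstar ∈ K) (hg : g ≠ 0)
    (hη : 0 ≤ η) (hlow : ‖g‖ ^ 2 / (2 * β) + H / 2 * ‖x - xstar‖ ^ 2 ≤ ⟪g, x - xstar⟫_ℝ) :
    ‖proj (x - (η / ‖g‖) • g) - xstar‖ ^ 2 ≤
      ‖x - xstar‖ ^ 2 - η * (‖g‖ / β + H / ‖g‖ * ‖x - xstar‖ ^ 2) + η ^ 2 := by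
  have hg' : ‖g‖ ≠ 0 := norm_ne_zero_iff.2 hg
  have hdescent : η * (‖g‖ / β + H / ‖g‖ * ‖x - xstar‖ ^ 2) ≤
      2 * (η / ‖g‖) * ⟪g, x - xstar⟫_ℝ := by
    calc η * (‖g‖ / β + H / ‖g‖ * ‖x - xstar‖ ^ 2)
        = 2 * (η / ‖g‖) * (‖g‖ ^ 2 / (2 * β) + H / 2 * ‖x - xstar‖ ^ 2) := by
          field_simp
      _ ≤ 2 * (η / ‖g‖) * ⟪g, x - xstar⟫_ℝ := by gcongr
  calc ‖proj (x - (η / ‖g‖) • g) - xstar‖ ^ 2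
      ≤ ‖x - (η / ‖g‖) • g - xstar‖ ^ 2 := by
        gcongr
        exact norm_proj_sub_le hK hmem hmin _ hxstar
    _ = ‖x - xstar‖ ^ 2 - 2 * (η / ‖g‖) * ⟪g, x - xstar⟫_ℝ + η ^ 2 := by
        rw [sub_right_comm, norm_sub_sq_real, real_inner_smul_right, real_inner_comm, norm_smul,
          Real.norm_of_nonneg (by positivity), div_mul_cancel₀ _ hg']
        ring
    _ ≤ _ := by linarith

end Step

theorem sum_le_sum_of_le_telescoping {u v w : ℕ → ℝ} {T : ℕ}
    (hstep : ∀ t ∈ Icc 1 T, w t + u t ≤ w (t - 1) + v t) (h0 : w 0 = 0) (hT : 0 ≤ w T) :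
    ∑ t ∈ Icc 1 T, u t ≤ ∑ t ∈ Icc 1 T, v t := by
  suffices h : w T + ∑ t ∈ Icc 1 T, u t ≤ ∑ t ∈ Icc 1 T, v t by linarith
  clear hT
  induction T with
  | zero => simp [h0]
  | succ n ih =>
    have hprev := ih fun t ht => hstep t (Icc_subset_Icc_right n.le_succ ht)
    have hlast := hstep (n + 1) (right_mem_Icc.2 (Nat.le_add_left 1 n))
    rw [Nat.add_sub_cancel] at hlast
    rw [sum_Icc_succ_top (Nat.le_add_left 1 n), sum_Icc_succ_top (Nat.le_add_left 1 n)]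
    linarith

theorem sum_Icc_inv_le_one_add_log (T : ℕ) : ∑ t ∈ Icc 1 T, (t : ℝ)⁻¹ ≤ 1 + log T := by
  simpa [harmonic_eq_sum_Icc] using harmonic_le_one_add_log T

theorem sum_inv_partial_sum_inv_le {a : ℕ → ℝ} {G : ℝ} {T : ℕ} (hT : 1 ≤ T)
    (ha_pos : ∀ t ∈ Icc 1 T, 0 < a t) (ha_le : ∀ t ∈ Icc 1 T, a t ≤ G) :
    ∑ t ∈ Icc 1 T, (∑ τ ∈ Icc 1 t, (a τ)⁻¹)⁻¹ ≤ G * (1 + log (∑ t ∈ Icc 1 T, G / a t)) := by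
  have h1T : 1 ∈ Icc 1 T := left_mem_Icc.2 hT
  have hG : 0 < G := (ha_pos 1 h1T).trans_le (ha_le 1 h1T)
  have hterm : ∀ t ∈ Icc 1 T, (∑ τ ∈ Icc 1 t, (a τ)⁻¹)⁻¹ ≤ G * (t : ℝ)⁻¹ := by
    intro t ht
    have ht1 : (1 : ℝ) ≤ t := by exact_mod_cast (mem_Icc.1 ht).1
    have hlower : (t : ℝ) * G⁻¹ ≤ ∑ τ ∈ Icc 1 t, (a τ)⁻¹ := by
      calc (t : ℝ) * G⁻¹ = ∑ _τ ∈ Icc 1 t, G⁻¹ := by simp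
        _ ≤ ∑ τ ∈ Icc 1 t, (a τ)⁻¹ := sum_le_sum fun τ hτ => by
          have hτT : τ ∈ Icc 1 T := Icc_subset_Icc_right (mem_Icc.1 ht).2 hτ
          exact inv_anti₀ (ha_pos τ hτT) (ha_le τ hτT)
    calc (∑ τ ∈ Icc 1 t, (a τ)⁻¹)⁻¹ ≤ ((t : ℝ) * G⁻¹)⁻¹ := inv_anti₀ (by positivity) hlower
      _ = G * (t : ℝ)⁻¹ := by rw [mul_inv, inv_inv, mul_comm]
  have hcount : (T : ℝ) ≤ ∑ t ∈ Icc 1 T, G / a t := by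
    calc (T : ℝ) = ∑ _t ∈ Icc 1 T, (1 : ℝ) := by simp
      _ ≤ ∑ t ∈ Icc 1 T, G / a t :=
        sum_le_sum fun t ht => (one_le_div (ha_pos t ht)).2 (ha_le t ht)
  calc ∑ t ∈ Icc 1 T, (∑ τ ∈ Icc 1 t, (a τ)⁻¹)⁻¹ ≤ ∑ t ∈ Icc 1 T, G * (t : ℝ)⁻¹ :=
        sum_le_sum hterm
    _ = G * ∑ t ∈ Icc 1 T, (t : ℝ)⁻¹ := (mul_sum ..).symm
    _ ≤ G * (1 + log T) := by gcongr; exact sum_Icc_inv_le_one_add_log T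
    _ ≤ G * (1 + log (∑ t ∈ Icc 1 T, G / a t)) := by gcongr

theorem sum_norm_le_mul_sum_stepSize {E : Type*} [NormedAddCommGroup E] [InnerProductSpace ℝ E]
    {K : Set E} {proj : E → E} (hK : Convex ℝ K) (hmem : ∀ y, proj y ∈ K)
    (hmin : ∀ y, ∀ z ∈ K, ‖proj y - y‖ ≤ ‖z - y‖) {xstar : E} (hxstar : xstar ∈ K)
    {H β : ℝ} (hH : 0 < H) (hβ : 0 < β) {T : ℕ} {x g : ℕ → E} {η : ℕ → ℝ}
    (hlow : ∀ t ∈ Icc 1 T, ‖g t‖ ^ 2 / (2 * β) + H / 2 * ‖x t - xstar‖ ^ 2 ≤ ⟪g t, x t - xstar⟫_ℝ)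
    (hgne : ∀ t ∈ Icc 1 T, g t ≠ 0)
    (hη : ∀ t, η t = 1 / (H * ∑ τ ∈ Icc 1 t, (‖g τ‖)⁻¹))
    (hupd : ∀ t ∈ Icc 1 T, x (t + 1) = proj (x t - (η t / ‖g t‖) • g t)) :
    ∑ t ∈ Icc 1 T, ‖g t‖ ≤ β * ∑ t ∈ Icc 1 T, η t := by
  set A : ℕ → ℝ := fun t => H * ∑ τ ∈ Icc 1 t, (‖g τ‖)⁻¹ with hA
  have hA_nonneg : ∀ t, 0 ≤ A t := fun t => by positivity
  have hη_inv : ∀ t, η t = (A t)⁻¹ := fun t => by rw [hη, one_div]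
  have hstep : ∀ t ∈ Icc 1 T, A t * ‖x (t + 1) - xstar‖ ^ 2 + ‖g t‖ / β ≤
      A (t - 1) * ‖x (t - 1 + 1) - xstar‖ ^ 2 + η t := by
    intro t ht
    obtain ⟨s, rfl⟩ : ∃ s, t = s + 1 := ⟨t - 1, by grind⟩
    have hA_succ : A (s + 1) = A s + H / ‖g (s + 1)‖ := by
      simp only [hA, sum_Icc_succ_top (Nat.le_add_left 1 s)]
      ring
    have hA_pos : 0 < A (s + 1) := by
      rw [hA_succ]
      have := norm_pos_iff.2 (hgne _ ht)
      positivity [hA_nonneg s]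
    have hηA : η (s + 1) * A (s + 1) = 1 := by rw [hη_inv, inv_mul_cancel₀ hA_pos.ne']
    have hdist := sq_norm_proj_step_sub_le hK hmem hmin hxstar (hgne _ ht)
      (hη_inv _ ▸ inv_nonneg.2 hA_pos.le) (hlow _ ht)
    rw [← hupd _ ht] at hdist
    rw [Nat.add_sub_cancel]
    linear_combination mul_le_mul_of_nonneg_left hdist hA_pos.le
      - (‖g (s + 1)‖ / β + H / ‖g (s + 1)‖ * ‖x (s + 1) - xstar‖ ^ 2 - η (s + 1)) * hηA
      + ‖x (s + 1) - xstar‖ ^ 2 * hA_succ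
  have hsum := sum_le_sum_of_le_telescoping hstep (by simp [hA]) (by positivity)
  rw [← sum_div, div_le_iff₀ hβ] at hsum
  linarith

theorem sc_adangd_one_grad_sum_bound_general
    {d : ℕ} (T : ℕ) (hT : 1 ≤ T) (H G β : ℝ) (hH : 0 < H)
    (K : Set (EuclideanSpace ℝ (Fin d)))
    (hKconv : Convex ℝ K)
    (proj : EuclideanSpace ℝ (Fin d) → EuclideanSpace ℝ (Fin d))
    (hproj_mem : ∀ y, proj y ∈ K)
    (hproj_min : ∀ y, ∀ z ∈ K, ‖proj y - y‖ ≤ ‖z - y‖)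
    (f : EuclideanSpace ℝ (Fin d) → ℝ)
    (hsc : ∀ x y, f x + (inner ℝ (gradient f x) (y - x) : ℝ) + (H / 2) * ‖x - y‖ ^ 2 ≤ f y)
    (hsmooth : ∀ x y, f y ≤ f x + (inner ℝ (gradient f x) (y - x) : ℝ) + (β / 2) * ‖x - y‖ ^ 2)
    (hG : ∀ x ∈ K, ‖gradient f x‖ ≤ G)
    (xstar : EuclideanSpace ℝ (Fin d)) (hxstarK : xstar ∈ K)
    (hmin : ∀ y, f xstar ≤ f y)
    (x : ℕ → EuclideanSpace ℝ (Fin d)) (g : ℕ → EuclideanSpace ℝ (Fin d)) (η : ℕ → ℝ)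
    (hx1 : x 1 ∈ K)
    (hg : ∀ t, g t = gradient f (x t))
    (hgne : ∀ t ∈ Finset.Icc 1 T, g t ≠ 0)
    (hη : ∀ t, η t = 1 / (H * ∑ τ ∈ Finset.Icc 1 t, (‖g τ‖)⁻¹))
    (hupd : ∀ t ∈ Finset.Icc 1 T, x (t + 1) = proj (x t - (η t / ‖g t‖) • g t))
    :
    ∑ t ∈ Finset.Icc 1 T, ‖g t‖ ≤
      (β / H) * G * (1 + Real.log (∑ t ∈ Finset.Icc 1 T, G / ‖g t‖)) := by
  have h1T : 1 ∈ Icc 1 T := left_mem_Icc.2 hT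
  have hxK : ∀ t ∈ Icc 1 T, x t ∈ K := by
    intro t ht
    obtain ⟨h1t, htT⟩ := mem_Icc.1 ht
    rcases h1t.eq_or_lt with rfl | h1t
    · exact hx1
    · rw [← Nat.sub_add_cancel h1t.le, hupd _ (mem_Icc.2 ⟨by omega, by omega⟩)]
      exact hproj_mem _
  have hβ : 0 < β := hH.trans_le <| le_of_quadratic_lower_le_upper
    (y := x 1 + g 1) (add_ne_left.2 (hgne 1 h1T)).symm (hsc _ _) (hsmooth _ _)
  have hlow : ∀ t ∈ Icc 1 T,
      ‖g t‖ ^ 2 / (2 * β) + H / 2 * ‖x t - xstar‖ ^ 2 ≤ ⟪g t, x t - xstar⟫_ℝ := fun t _ => by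
    rw [hg]
    exact inner_sub_ge_of_strongConvex_of_smooth hβ (hsc _ _) (hsmooth _) hmin
  calc ∑ t ∈ Icc 1 T, ‖g t‖
      ≤ β * ∑ t ∈ Icc 1 T, η t :=
        sum_norm_le_mul_sum_stepSize hKconv hproj_mem hproj_min hxstarK hH hβ hlow hgne hη hupd
    _ = β / H * ∑ t ∈ Icc 1 T, (∑ τ ∈ Icc 1 t, (‖g τ‖)⁻¹)⁻¹ := by
        simp only [hη, one_div, mul_inv, ← mul_sum]
        ring
    _ ≤ β / H * (G * (1 + log (∑ t ∈ Icc 1 T, G / ‖g t‖))) := by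
        gcongr
        exact sum_inv_partial_sum_inv_le hT (fun t ht => norm_pos_iff.2 (hgne t ht))
          fun t ht => hg t ▸ hG _ (hxK t ht)
    _ = _ := by ring

theorem sc_adangd_one_grad_sum_bound
    {d : ℕ} (T : ℕ) (hT : 1 ≤ T) (H G β : ℝ) (hH : 0 < H)
    (K : Set (EuclideanSpace ℝ (Fin d)))
    (hKne : K.Nonempty) (hKcl : IsClosed K) (hKbdd : Bornology.IsBounded K)
    (hKconv : Convex ℝ K)
    (proj : EuclideanSpace ℝ (Fin d) → EuclideanSpace ℝ (Fin d))
    (hproj_mem : ∀ y, proj y ∈ K)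
    (hproj_min : ∀ y, ∀ z ∈ K, ‖proj y - y‖ ≤ ‖z - y‖)
    (f : EuclideanSpace ℝ (Fin d) → ℝ)
    (hdiff : Differentiable ℝ f)
    (hsc : ∀ x y, f x + (inner ℝ (gradient f x) (y - x) : ℝ) + (H / 2) * ‖x - y‖ ^ 2 ≤ f y)
    (hsmooth : ∀ x y, f y ≤ f x + (inner ℝ (gradient f x) (y - x) : ℝ) + (β / 2) * ‖x - y‖ ^ 2)
    (hG : ∀ x ∈ K, ‖gradient f x‖ ≤ G)
    (xstar : EuclideanSpace ℝ (Fin d)) (hxstarK : xstar ∈ K)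
    (hmin : ∀ y, f xstar ≤ f y)
    (x : ℕ → EuclideanSpace ℝ (Fin d)) (g : ℕ → EuclideanSpace ℝ (Fin d)) (η : ℕ → ℝ)
    (hx1 : x 1 ∈ K)
    (hg : ∀ t, g t = gradient f (x t))
    (hgne : ∀ t ∈ Finset.Icc 1 T, g t ≠ 0)
    (hη : ∀ t, η t = 1 / (H * ∑ τ ∈ Finset.Icc 1 t, (‖g τ‖)⁻¹))
    (hupd : ∀ t ∈ Finset.Icc 1 T, x (t + 1) = proj (x t - (η t / ‖g t‖) • g t))
    :
    ∑ t ∈ Finset.Icc 1 T, ‖g t‖ ≤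
      (β / H) * G * (1 + Real.log (∑ t ∈ Finset.Icc 1 T, G / ‖g t‖)) :=
  sc_adangd_one_grad_sum_bound_general T hT H G β hH K hKconv proj hproj_mem hproj_min f hsc hsmooth
    hG xstar hxstarK hmin x g η hx1 hg hgne hη hupd
end
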